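/- Let V_θ = span_ℝ(−i e^{−iθ} b₂ − e^{−iθ} b₃, e^{iθ} b₂ + i e^{iθ} b₃) ⊂ ℂ² = span_ℂ(b₂,b₃). Then V_θ is invariant under the real-linear endomorphism J'(b₂,b₃) = (i b₂, −i b₃) if and only if θ = 0 (for θ ∈ [0, π/4]). -/

import Mathlib

open Complex

/-- First spanning vector of `V_θ`: `−i e^{−iθ} b₂ − e^{−iθ} b₃`. -/
noncomputable def v1 (θ : ℝ) : Fin 2 → ℂ :=
  ![-I * exp (-(θ : ℂ) * I), -exp (-(θ : ℂ) * I)]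

/-- Second spanning vector of `V_θ`: `e^{iθ} b₂ + i e^{iθ} b₃`. -/
noncomputable def v2 (θ : ℝ) : Fin 2 → ℂ :=
  ![exp ((θ : ℂ) * I), I * exp ((θ : ℂ) * I)]

/-- The real 2-plane `V_θ ⊂ ℂ²`. -/
noncomputable def Vsp (θ : ℝ) : Submodule ℝ (Fin 2 → ℂ) :=
  Submodule.span ℝ {v1 θ, v2 θ}

/-! Since `J' v₁ = e^{-2iθ} v₂` and `J' v₂ = -e^{2iθ} v₁`, and `v₁, v₂` are `ℂ`-linearly
independent, `V_θ` is `J'`-invariant exactly when `e^{-2iθ}` is real, i.e. `sin 2θ = 0`;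
on `[0, π/4]` this forces `θ = 0`. -/

theorem Submodule.forall_mem_span_map_mem_iff {R M : Type*} [Semiring R] [AddCommMonoid M]
    [Module R M] (f : M →ₗ[R] M) (s : Set M) :
    (∀ v ∈ span R s, f v ∈ span R s) ↔ ∀ v ∈ s, f v ∈ span R s :=
  ⟨fun h v hv => h v (subset_span hv),
    fun h _ hv => (span_le (p := (span R s).comap f)).2 h hv⟩

noncomputable def jPrime : (Fin 2 → ℂ) →ₗ[ℝ] (Fin 2 → ℂ) where
  toFun v := ![I * v 0, -I * v 1]
  map_add' u w := by
    ext i; fin_cases i <;> simp [mul_add]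
  map_smul' c u := by
    ext i; fin_cases i <;> simp [Complex.real_smul] <;> ring

theorem jPrime_apply (v : Fin 2 → ℂ) : jPrime v = ![I * v 0, -I * v 1] := rfl

theorem jPrime_v1 (θ : ℝ) : jPrime (v1 θ) = exp ((-(2 * θ) : ℝ) * I) • v2 θ := by
  have key : exp ((-(2 * θ) : ℝ) * I) * exp (θ * I) = exp (-θ * I) := by
    rw [← Complex.exp_add]; push_cast; ring_nf
  ext i; fin_cases i <;> simp only [jPrime_apply, v1, v2, Pi.smul_apply, smul_eq_mul, Fin.zero_eta,
    Fin.mk_one, Matrix.cons_val_zero, Matrix.cons_val_one]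
  · linear_combination -key - exp (-θ * I) * I_sq
  · linear_combination -I * key

theorem jPrime_v2 (θ : ℝ) : jPrime (v2 θ) = -(exp ((2 * θ : ℝ) * I) • v1 θ) := by
  have key : exp ((2 * θ : ℝ) * I) * exp (-θ * I) = exp (θ * I) := by
    rw [← Complex.exp_add]; push_cast; ring_nf
  ext i; fin_cases i <;> simp only [jPrime_apply, v1, v2, Pi.smul_apply, Pi.neg_apply, smul_eq_mul,
    Fin.zero_eta, Fin.mk_one, Matrix.cons_val_zero, Matrix.cons_val_one]
  · linear_combination -I * key
  · linear_combination -key - exp (θ * I) * I_sq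

theorem Vsp_invariant_iff (θ : ℝ) :
    (∀ v ∈ Vsp θ, jPrime v ∈ Vsp θ) ↔ jPrime (v1 θ) ∈ Vsp θ ∧ jPrime (v2 θ) ∈ Vsp θ := by
  simp only [Vsp, Submodule.forall_mem_span_map_mem_iff, Set.forall_mem_insert,
    Set.mem_singleton_iff, forall_eq]

theorem im_eq_zero_of_smul_v2_mem_Vsp {θ : ℝ} {c : ℂ} (hc : c • v2 θ ∈ Vsp θ) : c.im = 0 := by
  obtain ⟨a, b, hab⟩ := Submodule.mem_span_pair.1 hc
  have e0 := congrFun hab 0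
  have e1 := congrFun hab 1
  simp only [v1, v2, Pi.add_apply, Pi.smul_apply, Matrix.cons_val_zero, Matrix.cons_val_one,
    smul_eq_mul, Complex.real_smul] at e0 e1
  have hE := Complex.exp_ne_zero (-(θ : ℂ) * I)
  have hF := Complex.exp_ne_zero ((θ : ℂ) * I)
  -- `I * e0 - e1` eliminates `b` and `c`, leaving `2 a e^{-iθ} = 0`
  have ha : (a : ℂ) = 0 := by
    refine (mul_eq_zero.1 ?_).resolve_right hE
    linear_combination (I * e0 - e1) / 2 + ((a : ℂ) * exp (-(θ : ℂ) * I) / 2) * Complex.I_sq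
  have hcb : c = b := by
    refine mul_right_cancel₀ hF ?_
    linear_combination -e0 - I * exp (-(θ : ℂ) * I) * ha
  rw [hcb, Complex.ofReal_im]

theorem eq_zero_of_sin_two_mul_eq_zero {θ : ℝ} (hθ : θ ∈ Set.Icc 0 (Real.pi / 4))
    (h : Real.sin (2 * θ) = 0) : θ = 0 := by
  have := Real.pi_pos
  have h2θ := (Real.sin_eq_zero_iff_of_lt_of_lt (x := 2 * θ) (by linarith [hθ.1])
    (by linarith [hθ.2])).1 h
  linarith

theorem stmt_8 (θ : ℝ) (hθ : θ ∈ Set.Icc 0 (Real.pi / 4)) :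
    (∀ v ∈ Vsp θ, (![I * v 0, -I * v 1]) ∈ Vsp θ) ↔ θ = 0 := by
  simp only [← jPrime_apply]
  rw [Vsp_invariant_iff, jPrime_v1, jPrime_v2]
  constructor
  · rintro ⟨h, -⟩
    have him := im_eq_zero_of_smul_v2_mem_Vsp h
    rw [Complex.exp_ofReal_mul_I_im, Real.sin_neg, neg_eq_zero] at him
    exact eq_zero_of_sin_two_mul_eq_zero hθ him
  · rintro rfl
    simp only [mul_zero, neg_zero, ofReal_zero, zero_mul, exp_zero, one_smul]
    exact ⟨Submodule.subset_span (by simp), neg_mem (Submodule.subset_span (by simp))⟩
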